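/- Fix a continuous potential A : X → ℝ and a constraint φ ∈ C⁰(X,ℝ^n), and take h in the interior of the rotation set φ_*(M_T). If {φ_j} is a sequence of constraints converging uniformly to φ, then lim_{j→∞} β_{A,φ_j}(h) = β_{A,φ}(h). -/

import Mathlib

/-!
The rotation set `φ_*(M_T)` is compact and convex, and `‖ψ_*μ - φ_*μ‖ ≤ ‖ψ - φ‖_∞ =: δ` for
every `μ`. By separation, if `φ_*(M_T)` contains the ball `B(h, r)`, then `ψ_*(M_T)` contains
`B(h, r - δ)`. A measure in the fiber of one constraint over `h` has rotation vector within `δ`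
of `h` for the other one; mixing into it, with weight `O(δ / r)`, a measure whose rotation vector
lies on the far side of `h` moves it into the other fiber at a cost `O(δ / r) · sup |A|` in `∫ A`.
Hence `|β_{A,ψ}(h) - β_{A,φ}(h)| ≤ 8 sup |A| δ / r`, which tends to zero.
-/

open MeasureTheory Filter Topology Metric Set

variable {X : Type*} [MetricSpace X] [CompactSpace X] [MeasurableSpace X] [BorelSpace X]

/-- The set of `T`-invariant Borel probability measures on `X`. -/
def MT (T : X → X) : Set (ProbabilityMeasure X) :=
  {μ | (μ : Measure X).map T = (μ : Measure X)}

/-- The rotation vector `φ_*(μ)` of a measure `μ` with respect to a constraint `φ`. -/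
noncomputable def rotv {n : ℕ} (φ : X → EuclideanSpace ℝ (Fin n))
    (μ : ProbabilityMeasure X) : EuclideanSpace ℝ (Fin n) :=
  ∫ x, φ x ∂(μ : Measure X)

/-- The integral of the potential `A` against a measure. -/
noncomputable def intA (A : X → ℝ) (μ : ProbabilityMeasure X) : ℝ :=
  ∫ x, A x ∂(μ : Measure X)

/-- The beta function `β_{A,φ}(h) = sup {∫ A dμ : μ ∈ M_T, φ_*(μ) = h}`. -/
noncomputable def betaFn {n : ℕ} (T : X → X) (A : X → ℝ)
    (φ : X → EuclideanSpace ℝ (Fin n)) (h : EuclideanSpace ℝ (Fin n)) : ℝ :=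
  sSup (intA A '' {μ ∈ MT T | rotv φ μ = h})

/-- The alpha function `α_{A,φ}(c) = min_{h ∈ φ_*(M_T)} (⟨c,h⟩ - β_{A,φ}(h))`. -/
noncomputable def alphaFn {n : ℕ} (T : X → X) (A : X → ℝ)
    (φ : X → EuclideanSpace ℝ (Fin n)) (c : EuclideanSpace ℝ (Fin n)) : ℝ :=
  sInf ((fun h => (inner ℝ c h : ℝ) - betaFn T A φ h) '' (rotv φ '' MT T))

/-- The set `m_{A,φ}(h)` of `(A,h)`-maximizing measures. -/
noncomputable def mset {n : ℕ} (T : X → X) (A : X → ℝ)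
    (φ : X → EuclideanSpace ℝ (Fin n)) (h : EuclideanSpace ℝ (Fin n)) :
    Set (ProbabilityMeasure X) :=
  {μ ∈ MT T | rotv φ μ = h ∧ intA A μ = betaFn T A φ h}

open RealInnerProductSpace in
theorem Convex.ball_sub_subset_of_forall_exists_dist_le {E : Type*} [NormedAddCommGroup E]
    [InnerProductSpace ℝ E] [CompleteSpace E] {K : Set E} (hK : Convex ℝ K) (hKc : IsClosed K)
    {h : E} {r ε : ℝ} (hε : 0 ≤ ε) (hnear : ∀ p ∈ ball h r, ∃ k ∈ K, dist k p ≤ ε) :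
    ball h (r - ε) ⊆ K := by
  intro y hy
  by_contra hyK
  obtain ⟨f, u, hfK, hfy⟩ := geometric_hahn_banach_closed_point hK hKc hyK
  set v := (InnerProductSpace.toDual ℝ E).symm f
  have hv : ∀ x, ⟪v, x⟫ = f x := fun x => InnerProductSpace.toDual_symm_apply
  rw [mem_ball] at hy
  obtain ⟨s, hεs, hsr⟩ : ∃ s, ε < s ∧ dist y h + s < r :=
    ⟨(r - dist y h + ε) / 2, by linarith, by linarith⟩
  have hs : 0 ≤ s := by linarith
  -- push `y` a distance `s > ε` along `v`: the point of `K` near the result lies beyond `y`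
  set p := y + (s / ‖v‖) • v
  have hvp : ⟪v, p⟫ = ⟪v, y⟫ + s * ‖v‖ ∧ dist p y ≤ s := by
    rcases eq_or_ne v 0 with hv0 | hv0
    · simp [p, hv0, hs]
    · rw [inner_add_right, real_inner_smul_right, real_inner_self_eq_norm_sq, dist_eq_norm,
        add_sub_cancel_left, norm_smul, Real.norm_of_nonneg (by positivity)]
      constructor
      · field_simp
      · field_simp; rfl
  have hp : p ∈ ball h r := by
    rw [mem_ball]
    linarith [dist_triangle p y h, hvp.2]
  obtain ⟨k, hk, hkp⟩ := hnear p hp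
  have hvk : ⟪v, p⟫ - ‖v‖ * ε ≤ ⟪v, k⟫ := by
    have := abs_real_inner_le_norm v (k - p)
    rw [inner_sub_right, ← dist_eq_norm] at this
    nlinarith [abs_le.mp this, norm_nonneg v]
  have : f y ≤ f k := by
    rw [← hv, ← hv]
    nlinarith [mul_nonneg (norm_nonneg v) (show 0 ≤ s - ε by linarith)]
  linarith [hfK k hk]

theorem exists_mem_ball_combo_eq {E : Type*} [NormedAddCommGroup E] [NormedSpace ℝ E]
    (h a : E) {ρ : ℝ} (hρ : 0 < ρ) :
    ∃ q ∈ ball h ρ, ∃ t ∈ Icc (0 : ℝ) 1, t * ρ ≤ 2 * dist a h ∧ (1 - t) • a + t • q = h := by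
  rcases eq_or_ne a h with rfl | hah
  · exact ⟨a, mem_ball_self hρ, 0, ⟨le_rfl, zero_le_one⟩, by simp, by simp⟩
  -- overshoot `h` from `a` by `ρ / 2`; then `h` divides `[a, q]` in the ratio `d : ρ / 2`
  set d := dist a h
  have hd : 0 < d := dist_pos.mpr hah
  set t := d / (d + ρ / 2)
  have ht : t * (ρ / 2 / d) = 1 - t := by
    simp only [t]; field_simp; ring
  refine ⟨h + (ρ / 2 / d) • (h - a), ?_, t, ⟨by positivity, ?_⟩, ?_, ?_⟩
  · rw [mem_ball, dist_eq_norm, add_sub_cancel_left, norm_smul, ← dist_eq_norm, dist_comm,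
      Real.norm_of_nonneg (by positivity), div_mul_cancel₀ _ hd.ne']
    linarith
  · rw [div_le_one (by positivity)]; linarith
  · rw [div_mul_eq_mul_div, div_le_iff₀ (by positivity)]; nlinarith
  · rw [smul_add, smul_smul, ht]
    module

open scoped NNReal

namespace MeasureTheory.ProbabilityMeasure

variable {Ω : Type*} [MeasurableSpace Ω]

noncomputable def mix (a b : ℝ≥0) (hab : a + b = 1) (μ ν : ProbabilityMeasure Ω) :
    ProbabilityMeasure Ω :=
  ⟨a • (μ : Measure Ω) + b • (ν : Measure Ω), ⟨by simp [← ENNReal.coe_add, hab]⟩⟩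

theorem integral_mix {F : Type*} [NormedAddCommGroup F] [NormedSpace ℝ F]
    {a b : ℝ≥0} (hab : a + b = 1) (μ ν : ProbabilityMeasure Ω) {f : Ω → F}
    (hμ : Integrable f μ) (hν : Integrable f ν) :
    ∫ x, f x ∂(mix a b hab μ ν : Measure Ω) = (a : ℝ) • ∫ x, f x ∂μ + (b : ℝ) • ∫ x, f x ∂ν := by
  change ∫ x, f x ∂(a • (μ : Measure Ω) + b • (ν : Measure Ω)) = _
  rw [integral_add_measure (hμ.smul_measure_nnreal) (hν.smul_measure_nnreal),
    integral_smul_nnreal_measure, integral_smul_nnreal_measure]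
  rfl

end MeasureTheory.ProbabilityMeasure

theorem mix_mem_MT {Ω : Type*} [MeasurableSpace Ω] {T : Ω → Ω} (hT : Measurable T) {a b : ℝ≥0}
    (hab : a + b = 1) {μ ν : ProbabilityMeasure Ω} (hμ : μ ∈ MT T) (hν : ν ∈ MT T) :
    μ.mix a b hab ν ∈ MT T := by
  change Measure.map T (a • (μ : Measure Ω) + b • (ν : Measure Ω)) = _
  rw [Measure.map_add _ _ hT, Measure.map_smul, Measure.map_smul, hμ, hν]
  rfl

theorem abs_intA_le {Ω : Type*} [MeasurableSpace Ω] {A : Ω → ℝ} {C : ℝ} (hC : ∀ x, |A x| ≤ C)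
    (μ : ProbabilityMeasure Ω) : |intA A μ| ≤ C := by
  simpa [intA] using norm_integral_le_of_norm_le_const (μ := (μ : Measure Ω))
    (ae_of_all _ fun x => (Real.norm_eq_abs _).trans_le (hC x))

section RotationSet

variable {Ω : Type*} [TopologicalSpace Ω] [MeasurableSpace Ω] {n : ℕ}

theorem Continuous.integrable_of_compactSpace [CompactSpace Ω] [OpensMeasurableSpace Ω]
    {F : Type*} [NormedAddCommGroup F] {f : Ω → F}
    (hf : Continuous f) (μ : Measure Ω) [IsFiniteMeasure μ] : Integrable f μ :=
  hf.integrable_of_hasCompactSupport (HasCompactSupport.of_compactSpace f)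

theorem continuous_rotv [CompactSpace Ω] [OpensMeasurableSpace Ω]
    {φ : Ω → EuclideanSpace ℝ (Fin n)} (hφ : Continuous φ) : Continuous (rotv φ) := by
  have hcoord : ∀ i, Continuous fun x => φ x i := fun i =>
    (PiLp.continuous_apply 2 _ i).comp hφ
  have hrotv : rotv φ = fun μ : ProbabilityMeasure Ω =>
      WithLp.toLp 2 fun i => ∫ x, φ x i ∂(μ : Measure Ω) := by
    ext μ i
    exact eval_integral_piLp (fun i => (hcoord i).integrable_of_compactSpace _) i
  rw [hrotv]
  exact (PiLp.continuous_toLp 2 _).comp <| continuous_pi fun i =>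
    ProbabilityMeasure.continuous_integral_continuousMap (⟨_, hcoord i⟩ : C(Ω, ℝ))

theorem convex_rotv_image_MT [CompactSpace Ω] [OpensMeasurableSpace Ω] {T : Ω → Ω}
    (hT : Measurable T) {φ : Ω → EuclideanSpace ℝ (Fin n)} (hφ : Continuous φ) :
    Convex ℝ (rotv φ '' MT T) := by
  rintro _ ⟨μ, hμ, rfl⟩ _ ⟨ν, hν, rfl⟩ a b ha hb hab
  refine ⟨μ.mix ⟨a, ha⟩ ⟨b, hb⟩ (NNReal.eq hab) ν, mix_mem_MT hT _ hμ hν, ?_⟩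
  exact ProbabilityMeasure.integral_mix _ μ ν (hφ.integrable_of_compactSpace _)
    (hφ.integrable_of_compactSpace _)

theorem isClosed_MT [T2Space Ω] [HasOuterApproxClosed Ω] [BorelSpace Ω] {T : Ω → Ω}
    (hT : Continuous T) : IsClosed (MT T) := by
  have hMT : MT T = {μ | μ.map hT.measurable.aemeasurable = μ} := by
    ext μ
    rw [mem_ofPred_eq, ← ProbabilityMeasure.toMeasure_injective.eq_iff,
      ProbabilityMeasure.toMeasure_map]
    rfl
  rw [hMT]
  exact isClosed_eq (ProbabilityMeasure.continuous_map hT) continuous_id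

theorem isClosed_rotv_image_MT [CompactSpace Ω] [T2Space Ω] [HasOuterApproxClosed Ω]
    [BorelSpace Ω] {T : Ω → Ω} (hT : Continuous T) {φ : Ω → EuclideanSpace ℝ (Fin n)}
    (hφ : Continuous φ) : IsClosed (rotv φ '' MT T) :=
  ((isClosed_MT hT).isCompact.image (continuous_rotv hφ)).isClosed

theorem dist_rotv_le_dist [CompactSpace Ω] [OpensMeasurableSpace Ω]
    {φ ψ : C(Ω, EuclideanSpace ℝ (Fin n))} (μ : ProbabilityMeasure Ω) :
    dist (rotv ψ μ) (rotv φ μ) ≤ dist ψ φ := by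
  rw [dist_eq_norm, rotv, rotv, ← integral_sub (ψ.continuous.integrable_of_compactSpace _)
    (φ.continuous.integrable_of_compactSpace _)]
  refine (norm_integral_le_of_norm_le_const (C := dist ψ φ) (ae_of_all _ fun x => ?_)).trans
    (by simp)
  rw [← dist_eq_norm]
  exact ContinuousMap.dist_apply_le_dist x

end RotationSet

section Beta

variable {Ω : Type*} [MeasurableSpace Ω] {n : ℕ} {T : Ω → Ω} {A : Ω → ℝ} {C : ℝ}
  {h : EuclideanSpace ℝ (Fin n)}

theorem le_betaFn (hC : ∀ x, |A x| ≤ C) {ψ : Ω → EuclideanSpace ℝ (Fin n)}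
    {μ : ProbabilityMeasure Ω} (hμ : μ ∈ MT T) (hμh : rotv ψ μ = h) :
    intA A μ ≤ betaFn T A ψ h :=
  le_csSup ⟨C, by rintro _ ⟨ν, -, rfl⟩; exact (abs_le.mp (abs_intA_le hC ν)).2⟩
    ⟨μ, ⟨hμ, hμh⟩, rfl⟩

theorem betaFn_sub_le_betaFn (hC : ∀ x, |A x| ≤ C) {φ ψ : Ω → EuclideanSpace ℝ (Fin n)} {τ : ℝ}
    (hne : ∃ μ ∈ MT T, rotv φ μ = h)
    (hcorr : ∀ μ ∈ MT T, rotv φ μ = h → ∃ ν ∈ MT T, rotv ψ ν = h ∧ intA A μ - τ ≤ intA A ν) :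
    betaFn T A φ h - τ ≤ betaFn T A ψ h := by
  obtain ⟨μ₀, hμ₀, hμ₀h⟩ := hne
  rw [sub_le_iff_le_add]
  refine csSup_le ⟨_, μ₀, ⟨hμ₀, hμ₀h⟩, rfl⟩ ?_
  rintro _ ⟨μ, ⟨hμ, hμh⟩, rfl⟩
  obtain ⟨ν, hν, hνh, hle⟩ := hcorr μ hμ hμh
  linarith [le_betaFn hC hν hνh]

variable [TopologicalSpace Ω] [CompactSpace Ω] [OpensMeasurableSpace Ω]

theorem exists_rotv_eq_intA_ge (hT : Measurable T) (hA : Continuous A) (hC : ∀ x, |A x| ≤ C)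
    {ψ : Ω → EuclideanSpace ℝ (Fin n)} (hψ : Continuous ψ) {ρ : ℝ} (hρ : 0 < ρ)
    (hball : ball h ρ ⊆ rotv ψ '' MT T) {μ : ProbabilityMeasure Ω} (hμ : μ ∈ MT T) :
    ∃ ν ∈ MT T, rotv ψ ν = h ∧ intA A μ - 4 * C * dist (rotv ψ μ) h / ρ ≤ intA A ν := by
  obtain ⟨q, hq, t, ⟨ht₀, ht₁⟩, htρ, hcomb⟩ := exists_mem_ball_combo_eq h (rotv ψ μ) hρ
  obtain ⟨μ', hμ', rfl⟩ := hball hq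
  have hab : (⟨1 - t, sub_nonneg.2 ht₁⟩ : ℝ≥0) + ⟨t, ht₀⟩ = 1 := NNReal.eq (sub_add_cancel 1 t)
  refine ⟨μ.mix _ _ hab μ', mix_mem_MT hT hab hμ hμ', ?_, ?_⟩
  · rw [← hcomb]
    exact ProbabilityMeasure.integral_mix hab μ μ' (hψ.integrable_of_compactSpace _)
      (hψ.integrable_of_compactSpace _)
  · have hmix : intA A (μ.mix _ _ hab μ') = (1 - t) * intA A μ + t * intA A μ' :=
      ProbabilityMeasure.integral_mix hab μ μ' (hA.integrable_of_compactSpace _)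
        (hA.integrable_of_compactSpace _)
    have hμC := abs_le.mp (abs_intA_le hC μ)
    have hμ'C := abs_le.mp (abs_intA_le hC μ')
    have hcost : t * (2 * C) ≤ 4 * C * dist (rotv ψ μ) h / ρ := by
      rw [le_div_iff₀ hρ]
      nlinarith
    nlinarith

end Beta

section Perturbation

variable {Ω : Type*} [TopologicalSpace Ω] [CompactSpace Ω] [T2Space Ω] [HasOuterApproxClosed Ω]
  [MeasurableSpace Ω] [BorelSpace Ω] {n : ℕ} {T : Ω → Ω} {h : EuclideanSpace ℝ (Fin n)} {r : ℝ}

theorem ball_sub_dist_subset_rotv_image (hT : Continuous T)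
    {φ ψ : C(Ω, EuclideanSpace ℝ (Fin n))} (hball : ball h r ⊆ rotv φ '' MT T) :
    ball h (r - dist ψ φ) ⊆ rotv ψ '' MT T :=
  (convex_rotv_image_MT hT.measurable ψ.continuous).ball_sub_subset_of_forall_exists_dist_le
    (isClosed_rotv_image_MT hT ψ.continuous) dist_nonneg fun p hp => by
      obtain ⟨μ, hμ, rfl⟩ := hball hp
      exact ⟨_, ⟨μ, hμ, rfl⟩, dist_rotv_le_dist μ⟩

theorem abs_betaFn_sub_betaFn_le (hT : Continuous T) {A : Ω → ℝ} (hA : Continuous A) {C : ℝ}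
    (hC : ∀ x, |A x| ≤ C) {φ ψ : C(Ω, EuclideanSpace ℝ (Fin n))} (hr : 0 < r)
    (hball : ball h r ⊆ rotv φ '' MT T) (hψφ : 2 * dist ψ φ ≤ r) :
    |betaFn T A ψ h - betaFn T A φ h| ≤ 8 * C * dist ψ φ / r := by
  obtain ⟨μ₀, hμ₀, -⟩ := hball (mem_ball_self hr)
  have hC₀ : 0 ≤ C := (abs_nonneg _).trans (abs_intA_le hC μ₀)
  have hballψ : ball h (r / 2) ⊆ rotv ψ '' MT T :=
    (ball_subset_ball (by linarith)).trans (ball_sub_dist_subset_rotv_image hT hball)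
  have hcost : ∀ {d ρ : ℝ}, d ≤ dist ψ φ → r ≤ 2 * ρ →
      4 * C * d / ρ ≤ 8 * C * dist ψ φ / r := by
    intro d ρ hd hρ
    rw [div_le_div_iff₀ (by linarith) hr]
    have hCδ : 0 ≤ 4 * C * dist ψ φ := by positivity
    nlinarith [mul_le_mul_of_nonneg_left hd (by positivity : 0 ≤ 4 * C * r),
      mul_le_mul_of_nonneg_left hρ hCδ]
  rw [abs_sub_le_iff]
  constructor
  · refine sub_le_comm.mp (betaFn_sub_le_betaFn hC (hballψ (mem_ball_self (half_pos hr)))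
      fun μ hμ hμh => ?_)
    obtain ⟨ν, hν, hνh, hle⟩ :=
      exists_rotv_eq_intA_ge hT.measurable hA hC φ.continuous hr hball hμ
    refine ⟨ν, hν, hνh, le_trans ?_ hle⟩
    rw [← hμh, dist_comm (rotv φ μ)]
    exact sub_le_sub_left (hcost (dist_rotv_le_dist μ) (by linarith : r ≤ 2 * r)) _
  · refine sub_le_comm.mp (betaFn_sub_le_betaFn hC (hball (mem_ball_self hr)) fun μ hμ hμh => ?_)
    obtain ⟨ν, hν, hνh, hle⟩ :=
      exists_rotv_eq_intA_ge hT.measurable hA hC ψ.continuous (half_pos hr) hballψ hμ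
    refine ⟨ν, hν, hνh, le_trans ?_ hle⟩
    rw [← hμh]
    exact sub_le_sub_left (hcost (dist_rotv_le_dist μ) (by linarith : r ≤ 2 * (r / 2))) _

end Perturbation

/-- if `h` lies in the interior of the rotation set `φ_*(M_T)` and `φ_j → φ`
uniformly, then `β_{A,φ_j}(h) → β_{A,φ}(h)`. -/
theorem stmt11 {n : ℕ} (T : X → X) (hT : Continuous T) (A : X → ℝ) (hA : Continuous A)
    (φ : C(X, EuclideanSpace ℝ (Fin n))) (φseq : ℕ → C(X, EuclideanSpace ℝ (Fin n)))
    (hconv : Tendsto φseq atTop (𝓝 φ))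
    (h : EuclideanSpace ℝ (Fin n)) (hh : h ∈ interior (rotv (⇑φ) '' MT T)) :
    Tendsto (fun j => betaFn T A (⇑(φseq j)) h) atTop (𝓝 (betaFn T A (⇑φ) h)) := by
  obtain ⟨r, hr, hball⟩ := Metric.isOpen_iff.mp isOpen_interior h hh
  obtain ⟨C, hC⟩ := isCompact_univ.exists_bound_of_continuousOn hA.continuousOn
  have hδ : Tendsto (fun j => dist (φseq j) φ) atTop (𝓝 0) :=
    tendsto_iff_dist_tendsto_zero.mp hconv
  rw [tendsto_iff_dist_tendsto_zero]
  refine squeeze_zero' (.of_forall fun j => dist_nonneg) ?_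
    (by simpa using (hδ.const_mul (8 * C)).div_const r)
  filter_upwards [hδ.eventually (ge_mem_nhds (half_pos hr))] with j hj
  exact abs_betaFn_sub_betaFn_le hT hA (fun x => (Real.norm_eq_abs _).symm.trans_le (hC x trivial))
    hr (hball.trans interior_subset) (by linarith)
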